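/- Soundness of the repetition unfolding axiom [*] for Demon: For every hybrid game α and all sets of states X, Y ⊆ S, Demon's semi-competitive winning region of the repetition game satisfies δ_{α*}(X, Y) = (X ∩ Y) ∪ (ς_{α ; α*}(X, Y) ∩ δ_{α ; α*}(X, Y)) ∪ (Y ∩ δ_{α ; α*}(Yᶜ, Y)). -/
import Mathlib


open Set

/-- Hybrid games over a variable set `V`. Terms/ODE right-hand sides are
interpreted as functions from states `V → ℝ` to `ℝ`; tests and evolution
domain constraints are sets of states. -/
inductive Game (V : Type*) where
  | assign (x : V) (e : (V → ℝ) → ℝ)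
  | ode (x : V) (f : (V → ℝ) → ℝ) (Q : Set (V → ℝ))
  | test (Q : Set (V → ℝ))
  | choice (a b : Game V)
  | seq (a b : Game V)
  | dual (a : Game V)
  | star (a : Game V)

variable {V : Type*} [DecidableEq V]

/-- `φ : ℝ → (V → ℝ)` (restricted to `[0,r]`) is a solution of `x' = f(x) & Q`
of duration `r ≥ 0`: `t ↦ φ t x` is differentiable with derivative `f (φ s)`
at each `s ∈ [0,r]`, `φ s ∈ Q` on `[0,r]`, and all other variables stay
constant along `φ`. -/
def IsSolution (x : V) (f : (V → ℝ) → ℝ) (Q : Set (V → ℝ)) (r : ℝ)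
    (φ : ℝ → (V → ℝ)) : Prop :=
  0 ≤ r ∧
  (∀ s ∈ Set.Icc 0 r, HasDerivAt (fun t => φ t x) (f (φ s)) s) ∧
  (∀ s ∈ Set.Icc 0 r, φ s ∈ Q) ∧
  (∀ s ∈ Set.Icc 0 r, ∀ y, y ≠ x → φ s y = φ 0 y)

mutual
/-- Angel's semi-competitive winning region ς_α(X,Y). -/
def angel : Game V → Set (V → ℝ) → Set (V → ℝ) → Set (V → ℝ)
  | .assign x e, X, _ => {ω | Function.update ω x (e ω) ∈ X}
  | .ode x f Q, X, _ =>
      {ω | ∃ r φ, IsSolution x f Q r φ ∧ φ 0 = ω ∧ φ r ∈ X}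
  | .test Q, X, _ => Q ∩ X
  | .choice a b, X, Y => angel a X Y ∪ angel b X Y
  | .seq a b, X, Y => angel a (angel b X Y) (demon b X Y)
  | .dual a, X, Y => demon a Y X
  | .star a, X, Y =>
      ⋂₀ {Z | X ∪ angel a Z Zᶜ ⊆ Z} ∪
      ⋂₀ {Z | (X ∩ Y) ∪ (angel a Z Z ∩ demon a Z Z) ⊆ Z}

/-- Demon's semi-competitive winning region δ_α(X,Y). -/
def demon : Game V → Set (V → ℝ) → Set (V → ℝ) → Set (V → ℝ)
  | .assign x e, _, Y => {ω | Function.update ω x (e ω) ∈ Y}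
  | .ode x f Q, X, Y =>
      {ω | ∀ r φ, IsSolution x f Q r φ → φ 0 = ω → ∀ s ∈ Set.Icc 0 r, φ s ∈ Y} ∪
      {ω | ∃ r φ, IsSolution x f Q r φ ∧ φ 0 = ω ∧ ∃ s ∈ Set.Icc 0 r, φ s ∈ X ∩ Y}
  | .test Q, _, Y => Qᶜ ∪ Y
  | .choice a b, X, Y =>
      (demon a X Y ∩ demon b X Y) ∪ (demon a X Y ∩ angel a X Y) ∪
      (demon b X Y ∩ angel b X Y)
  | .seq a b, X, Y => demon a (angel b X Y) (demon b X Y)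
  | .dual a, X, Y => angel a Y X
  | .star a, X, Y =>
      ⋃₀ {Z | Z ⊆ Y ∩ demon a Zᶜ Z} ∪
      ⋂₀ {Z | (X ∩ Y) ∪ (angel a Z Z ∩ demon a Z Z) ⊆ Z}
end

/-- Angel's one-argument zero-sum dGL winning region ς_α(X). -/
def dglAngel : Game V → Set (V → ℝ) → Set (V → ℝ)
  | .assign x e, X => {ω | Function.update ω x (e ω) ∈ X}
  | .ode x f Q, X => {ω | ∃ r φ, IsSolution x f Q r φ ∧ φ 0 = ω ∧ φ r ∈ X}
  | .test Q, X => Q ∩ X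
  | .choice a b, X => dglAngel a X ∪ dglAngel b X
  | .seq a b, X => dglAngel a (dglAngel b X)
  | .dual a, X => (dglAngel a Xᶜ)ᶜ
  | .star a, X => ⋂₀ {Z | X ∪ dglAngel a Z ⊆ Z}

/-- Demon's one-argument zero-sum dGL winning region δ_α(X) = (ς_α(Xᶜ))ᶜ. -/
def dglDemon (g : Game V) (X : Set (V → ℝ)) : Set (V → ℝ) :=
  (dglAngel g Xᶜ)ᶜ

/-- Systematization α^{-d}: removes all dual operators. -/
def Game.sys : Game V → Game V
  | .assign x e => .assign x e
  | .ode x f Q => .ode x f Q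
  | .test Q => .test Q
  | .choice a b => .choice a.sys b.sys
  | .seq a b => .seq a.sys b.sys
  | .dual a => a.sys
  | .star a => .star a.sys

set_option linter.unusedSectionVars false
theorem IsSolution.trunc {x : V} {f : (V → ℝ) → ℝ} {Q : Set (V → ℝ)} {r : ℝ}
    {φ : ℝ → (V → ℝ)} (h : IsSolution x f Q r φ) {s : ℝ} (hs : s ∈ Set.Icc 0 r) :
    IsSolution x f Q s φ := by
  obtain ⟨hr, h1, h2, h3⟩ := h
  exact ⟨hs.1, fun t ht => h1 t ⟨ht.1, ht.2.trans hs.2⟩,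
    fun t ht => h2 t ⟨ht.1, ht.2.trans hs.2⟩,
    fun t ht => h3 t ⟨ht.1, ht.2.trans hs.2⟩⟩

theorem dglAngel_mono (g : Game V) : ∀ ⦃X Y : Set (V → ℝ)⦄, X ⊆ Y →
    dglAngel g X ⊆ dglAngel g Y := by
  induction g with
  | assign x e => intro X Y h ω hω; exact h hω
  | ode x f Q =>
      intro X Y h ω hω
      obtain ⟨r, φ, hsol, h0, hr⟩ := hω
      exact ⟨r, φ, hsol, h0, h hr⟩
  | test Q => intro X Y h; exact Set.inter_subset_inter_right _ h
  | choice a b iha ihb =>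
      intro X Y h; exact Set.union_subset_union (iha h) (ihb h)
  | seq a b iha ihb => intro X Y h; exact iha (ihb h)
  | dual a iha =>
      intro X Y h
      exact Set.compl_subset_compl.2 (iha (Set.compl_subset_compl.2 h))
  | star a iha =>
      intro X Y h
      apply Set.sInter_subset_sInter
      intro Z hZ
      exact (Set.union_subset_union_left _ h).trans hZ
theorem dglDemon_mono (g : Game V) ⦃X Y : Set (V → ℝ)⦄ (h : X ⊆ Y) :
    dglDemon g X ⊆ dglDemon g Y :=
  Set.compl_subset_compl.2 (dglAngel_mono g (Set.compl_subset_compl.2 h))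

theorem ad_mono (g : Game V) : ∀ ⦃X X' Y Y' : Set (V → ℝ)⦄, X ⊆ X' → Y ⊆ Y' →
    angel g X Y ⊆ angel g X' Y' ∧ demon g X Y ⊆ demon g X' Y' := by
  induction g with
  | assign x e =>
      intro X X' Y Y' hX hY
      exact ⟨fun ω hω => hX hω, fun ω hω => hY hω⟩
  | ode x f Q =>
      intro X X' Y Y' hX hY
      constructor
      · rintro ω ⟨r, φ, hsol, h0, hr⟩
        exact ⟨r, φ, hsol, h0, hX hr⟩
      · rintro ω (hω | ⟨r, φ, hsol, h0, s, hs, hmem⟩)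
        · exact Or.inl fun r φ hsol h0 s hs => hY (hω r φ hsol h0 s hs)
        · exact Or.inr ⟨r, φ, hsol, h0, s, hs, hX hmem.1, hY hmem.2⟩
  | test Q =>
      intro X X' Y Y' hX hY
      exact ⟨Set.inter_subset_inter_right _ hX,
        Set.union_subset_union_right _ hY⟩
  | choice a b iha ihb =>
      intro X X' Y Y' hX hY
      refine ⟨Set.union_subset_union ((iha hX hY).1) ((ihb hX hY).1), ?_⟩
      refine Set.union_subset_union (Set.union_subset_union ?_ ?_) ?_
      · exact Set.inter_subset_inter (iha hX hY).2 (ihb hX hY).2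
      · exact Set.inter_subset_inter (iha hX hY).2 (iha hX hY).1
      · exact Set.inter_subset_inter (ihb hX hY).2 (ihb hX hY).1
  | seq a b iha ihb =>
      intro X X' Y Y' hX hY
      exact ⟨(iha (ihb hX hY).1 (ihb hX hY).2).1,
        (iha (ihb hX hY).1 (ihb hX hY).2).2⟩
  | dual a iha =>
      intro X X' Y Y' hX hY
      exact ⟨(iha hY hX).2, (iha hY hX).1⟩
  | star a iha =>
      intro X X' Y Y' hX hY
      constructor
      · apply Set.union_subset_union
        · exact Set.sInter_subset_sInter fun Z hZ =>
            (Set.union_subset_union_left _ hX).trans hZ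
        · exact Set.sInter_subset_sInter fun Z hZ =>
            (Set.union_subset_union_left _ (Set.inter_subset_inter hX hY)).trans hZ
      · apply Set.union_subset_union
        · exact Set.sUnion_subset_sUnion fun Z hZ =>
            hZ.trans (Set.inter_subset_inter_left _ hY)
        · exact Set.sInter_subset_sInter fun Z hZ =>
            (Set.union_subset_union_left _ (Set.inter_subset_inter hX hY)).trans hZ
theorem dglAngel_star_prefixed (g : Game V) (X : Set (V → ℝ)) :
    X ∪ dglAngel g (dglAngel (Game.star g) X) ⊆ dglAngel (Game.star g) X := by
  show _ ⊆ ⋂₀ {Z | X ∪ dglAngel g Z ⊆ Z}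
  intro ω hω Z hZ
  refine hZ ?_
  rcases hω with hω | hω
  · exact Or.inl hω
  · exact Or.inr (dglAngel_mono g (Set.sInter_subset_of_mem hZ) hω)

theorem dglAngel_star_fixed (g : Game V) (X : Set (V → ℝ)) :
    dglAngel (Game.star g) X = X ∪ dglAngel g (dglAngel (Game.star g) X) := by
  refine subset_antisymm ?_ (dglAngel_star_prefixed g X)
  refine Set.sInter_subset_of_mem ?_
  show X ∪ dglAngel g (X ∪ dglAngel g (dglAngel (Game.star g) X)) ⊆ _
  refine Set.union_subset (Set.subset_union_left) ?_
  exact (dglAngel_mono g (dglAngel_star_prefixed g X)).trans Set.subset_union_right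

theorem dglDemon_star_fixed (g : Game V) (Y : Set (V → ℝ)) :
    dglDemon (Game.star g) Y = Y ∩ dglDemon g (dglDemon (Game.star g) Y) := by
  have h := dglAngel_star_fixed g Yᶜ
  unfold dglDemon
  conv_lhs => rw [h]
  rw [Set.compl_union, compl_compl]
  congr 1
  rw [compl_compl]

theorem gfp_compl (g : Game V) (Y : Set (V → ℝ)) :
    ⋃₀ {Z | Z ⊆ Y ∩ dglDemon g Z} = dglDemon (Game.star g) Y := by
  apply subset_antisymm
  · rintro ω ⟨Z, hZ, hω⟩
    intro hmem
    have : ⋂₀ {W | Yᶜ ∪ dglAngel g W ⊆ W} ⊆ Zᶜ := by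
      apply Set.sInter_subset_of_mem
      show Yᶜ ∪ dglAngel g Zᶜ ⊆ Zᶜ
      rintro x (hx | hx) hxZ
      · exact hx (hZ hxZ).1
      · exact (hZ hxZ).2 hx
    exact this hmem hω
  · intro ω hω
    exact ⟨dglDemon (Game.star g) Y, le_of_eq (dglDemon_star_fixed g Y), hω⟩
theorem zs (g : Game V) :
    (∀ X : Set (V → ℝ), angel g X Xᶜ = dglAngel g X) ∧
    (∀ X : Set (V → ℝ), demon g Xᶜ X = dglDemon g X) ∧
    (∀ X Y : Set (V → ℝ), X ∩ Y = ∅ → angel g X Y ∩ demon g X Y = ∅) := by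
  induction g with
  | assign x e =>
      refine ⟨fun X => rfl, fun X => ?_, fun X Y h => ?_⟩
      · ext ω; simp [demon, dglDemon, dglAngel]
      · ext ω
        simp only [angel, demon, Set.mem_inter_iff, Set.mem_setOf_eq,
          Set.mem_empty_iff_false, iff_false, not_and]
        intro h1 h2
        exact Set.eq_empty_iff_forall_notMem.1 h _ ⟨h1, h2⟩
  | ode x f Q =>
      refine ⟨fun X => rfl, fun X => ?_, fun X Y h => ?_⟩
      · ext ω
        constructor
        · rintro (hall | ⟨r, φ, hsol, h0, s, hs, hmem⟩)
          · rintro ⟨r, φ, hsol, h0, hr⟩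
            exact hr (hall r φ hsol h0 r ⟨hsol.1, le_refl r⟩)
          · exact absurd hmem.2 hmem.1
        · intro hω
          left
          intro r φ hsol h0 s hs
          by_contra hc
          exact hω ⟨s, φ, hsol.trunc hs, h0, hc⟩
      · apply Set.eq_empty_iff_forall_notMem.2
        rintro ω ⟨⟨r, φ, hsol, h0, hr⟩, hall | ⟨r', φ', hs', h0', s, hs2, hmem⟩⟩
        · have : φ r ∈ Y := hall r φ hsol h0 r ⟨hsol.1, le_refl r⟩
          exact Set.eq_empty_iff_forall_notMem.1 h _ ⟨hr, this⟩
        · rw [h] at hmem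
          exact hmem
  | test Q =>
      refine ⟨fun X => rfl, fun X => ?_, fun X Y h => ?_⟩
      · ext ω; simp [demon, dglDemon, dglAngel]; tauto
      · apply Set.eq_empty_iff_forall_notMem.2
        rintro ω ⟨⟨hq, hx⟩, hq' | hy⟩
        · exact hq' hq
        · exact Set.eq_empty_iff_forall_notMem.1 h _ ⟨hx, hy⟩
  | choice a b iha ihb =>
      obtain ⟨ha1, ha2, ha3⟩ := iha
      obtain ⟨hb1, hb2, hb3⟩ := ihb
      refine ⟨fun X => ?_, fun X => ?_, fun X Y h => ?_⟩
      · show angel a X Xᶜ ∪ angel b X Xᶜ = dglAngel (Game.choice a b) X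
        rw [ha1, hb1]; rfl
      · have ea : demon a Xᶜ X ∩ angel a Xᶜ X = ∅ := by
          rw [Set.inter_comm]; exact ha3 Xᶜ X (Set.compl_inter_self X)
        have eb : demon b Xᶜ X ∩ angel b Xᶜ X = ∅ := by
          rw [Set.inter_comm]; exact hb3 Xᶜ X (Set.compl_inter_self X)
        show (demon a Xᶜ X ∩ demon b Xᶜ X) ∪ (demon a Xᶜ X ∩ angel a Xᶜ X) ∪
          (demon b Xᶜ X ∩ angel b Xᶜ X) = dglDemon (Game.choice a b) X
        rw [ea, eb, Set.union_empty, Set.union_empty, ha2, hb2]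
        simp [dglDemon, dglAngel, Set.compl_union]
      · have ea := Set.eq_empty_iff_forall_notMem.1 (ha3 X Y h)
        have eb := Set.eq_empty_iff_forall_notMem.1 (hb3 X Y h)
        apply Set.eq_empty_iff_forall_notMem.2
        rintro ω ⟨h1, h2⟩
        have h1' : ω ∈ angel a X Y ∨ ω ∈ angel b X Y := h1
        have h2' : (ω ∈ demon a X Y ∧ ω ∈ demon b X Y ∨
            ω ∈ demon a X Y ∧ ω ∈ angel a X Y) ∨
            ω ∈ demon b X Y ∧ ω ∈ angel b X Y := h2
        rcases h1' with hA | hB <;>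
          rcases h2' with (⟨hda, hdb⟩ | ⟨hda, hsa⟩) | ⟨hdb, hsb⟩
        · exact ea ω ⟨hA, hda⟩
        · exact ea ω ⟨hsa, hda⟩
        · exact eb ω ⟨hsb, hdb⟩
        · exact eb ω ⟨hB, hdb⟩
        · exact ea ω ⟨hsa, hda⟩
        · exact eb ω ⟨hB, hdb⟩
  | seq a b iha ihb =>
      obtain ⟨ha1, ha2, ha3⟩ := iha
      obtain ⟨hb1, hb2, hb3⟩ := ihb
      have hbc : ∀ X : Set (V → ℝ), demon b X Xᶜ = (dglAngel b X)ᶜ := by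
        intro X
        have := hb2 Xᶜ
        rw [compl_compl] at this
        rw [this]
        simp [dglDemon, compl_compl]
      have hbc2 : ∀ X : Set (V → ℝ), angel b Xᶜ X = (dglDemon b X)ᶜ := by
        intro X
        have := hb1 Xᶜ
        rw [compl_compl] at this
        rw [this]
        simp [dglDemon, compl_compl]
      refine ⟨fun X => ?_, fun X => ?_, fun X Y h => ?_⟩
      · show angel a (angel b X Xᶜ) (demon b X Xᶜ) = dglAngel (Game.seq a b) X
        rw [hb1, hbc, ha1]; rfl
      · show demon a (angel b Xᶜ X) (demon b Xᶜ X) = dglDemon (Game.seq a b) X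
        rw [hb2, hbc2, ha2]
        simp [dglDemon, dglAngel]
      · exact ha3 _ _ (hb3 X Y h)
  | dual a iha =>
      obtain ⟨ha1, ha2, ha3⟩ := iha
      refine ⟨fun X => ?_, fun X => ?_, fun X Y h => ?_⟩
      · show demon a Xᶜ X = dglAngel (Game.dual a) X
        rw [ha2]; rfl
      · show angel a X Xᶜ = dglDemon (Game.dual a) X
        rw [ha1]
        simp [dglDemon, dglAngel, compl_compl]
      · show (demon a Y X) ∩ (angel a Y X) = ∅
        rw [Set.inter_comm]
        exact ha3 Y X (by rw [Set.inter_comm]; exact h)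
  | star a iha =>
      obtain ⟨ha1, ha2, ha3⟩ := iha
      have hF0 : angel a ∅ ∅ ∩ demon a ∅ ∅ = ∅ := ha3 ∅ ∅ (by simp)
      have hBempty : ∀ X Y : Set (V → ℝ), X ∩ Y = ∅ →
          ⋂₀ {Z | (X ∩ Y) ∪ (angel a Z Z ∩ demon a Z Z) ⊆ Z} = ∅ := by
        intro X Y h
        refine subset_antisymm ?_ (Set.empty_subset _)
        apply Set.sInter_subset_of_mem
        show (X ∩ Y) ∪ (angel a ∅ ∅ ∩ demon a ∅ ∅) ⊆ ∅
        rw [h, hF0]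
        simp
      have hsetA : ∀ X : Set (V → ℝ),
          ⋂₀ {Z | X ∪ angel a Z Zᶜ ⊆ Z} = dglAngel (Game.star a) X := by
        intro X
        have : {Z : Set (V → ℝ) | X ∪ angel a Z Zᶜ ⊆ Z}
            = {Z | X ∪ dglAngel a Z ⊆ Z} := by
          ext Z; rw [Set.mem_setOf_eq, Set.mem_setOf_eq, ha1 Z]
        rw [this]; rfl
      have hsetD : ∀ Y : Set (V → ℝ),
          ⋃₀ {Z | Z ⊆ Y ∩ demon a Zᶜ Z} = dglDemon (Game.star a) Y := by
        intro Y
        have : {Z : Set (V → ℝ) | Z ⊆ Y ∩ demon a Zᶜ Z}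
            = {Z | Z ⊆ Y ∩ dglDemon a Z} := by
          ext Z; rw [Set.mem_setOf_eq, Set.mem_setOf_eq, ha2 Z]
        rw [this]
        exact gfp_compl a Y
      refine ⟨fun X => ?_, fun X => ?_, fun X Y h => ?_⟩
      · show ⋂₀ {Z | X ∪ angel a Z Zᶜ ⊆ Z} ∪
          ⋂₀ {Z | (X ∩ Xᶜ) ∪ (angel a Z Z ∩ demon a Z Z) ⊆ Z}
            = dglAngel (Game.star a) X
        rw [hBempty X Xᶜ (Set.inter_compl_self X), Set.union_empty, hsetA]
      · show ⋃₀ {Z | Z ⊆ X ∩ demon a Zᶜ Z} ∪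
          ⋂₀ {Z | (Xᶜ ∩ X) ∪ (angel a Z Z ∩ demon a Z Z) ⊆ Z}
            = dglDemon (Game.star a) X
        rw [hBempty Xᶜ X (Set.compl_inter_self X), Set.union_empty, hsetD]
      · show (⋂₀ {Z | X ∪ angel a Z Zᶜ ⊆ Z} ∪
          ⋂₀ {Z | (X ∩ Y) ∪ (angel a Z Z ∩ demon a Z Z) ⊆ Z}) ∩
          (⋃₀ {Z | Z ⊆ Y ∩ demon a Zᶜ Z} ∪
          ⋂₀ {Z | (X ∩ Y) ∪ (angel a Z Z ∩ demon a Z Z) ⊆ Z}) = ∅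
        rw [hBempty X Y h, Set.union_empty, Set.union_empty, hsetA, hsetD]
        apply Set.eq_empty_iff_forall_notMem.2
        rintro ω ⟨h1, h2⟩
        have hXY : X ⊆ Yᶜ := by
          intro z hz hzY
          exact Set.eq_empty_iff_forall_notMem.1 h z ⟨hz, hzY⟩
        have : ω ∈ dglAngel (Game.star a) Yᶜ := dglAngel_mono _ hXY h1
        exact h2 this
/-- The least fixed point of the cooperative-tie map is a pre-fixed point. -/
theorem tieB_prefixed (g : Game V) (W : Set (V → ℝ)) :
    W ∪ (angel g (⋂₀ {Z | W ∪ (angel g Z Z ∩ demon g Z Z) ⊆ Z})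
        (⋂₀ {Z | W ∪ (angel g Z Z ∩ demon g Z Z) ⊆ Z}) ∩
      demon g (⋂₀ {Z | W ∪ (angel g Z Z ∩ demon g Z Z) ⊆ Z})
        (⋂₀ {Z | W ∪ (angel g Z Z ∩ demon g Z Z) ⊆ Z})) ⊆
      ⋂₀ {Z | W ∪ (angel g Z Z ∩ demon g Z Z) ⊆ Z} := by
  intro ω hω Z hZ
  refine hZ ?_
  rcases hω with hω | hω
  · exact Or.inl hω
  · have hsub := Set.sInter_subset_of_mem (S := {Z | W ∪ (angel g Z Z ∩ demon g Z Z) ⊆ Z}) hZ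
    exact Or.inr ⟨(ad_mono g hsub hsub).1 hω.1, (ad_mono g hsub hsub).2 hω.2⟩

theorem crossStar (g : Game V)
    (hL5 : ∀ U' V' : Set (V → ℝ), dglAngel g U' ∩ dglDemon g V' ⊆
      angel g (U' ∩ V') (U' ∩ V') ∩ demon g (U' ∩ V') (U' ∩ V'))
    (U W : Set (V → ℝ)) :
    dglAngel (Game.star g) U ∩ dglDemon (Game.star g) W ⊆
      ⋂₀ {Z | (U ∩ W) ∪ (angel g Z Z ∩ demon g Z Z) ⊆ Z} := by
  set B₀ := ⋂₀ {Z | (U ∩ W) ∪ (angel g Z Z ∩ demon g Z Z) ⊆ Z} with hB₀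
  set A := dglDemon (Game.star g) W with hA
  have hAfix : A = W ∩ dglDemon g A := dglDemon_star_fixed g W
  have hE : dglAngel (Game.star g) U ⊆ Aᶜ ∪ B₀ := by
    show ⋂₀ {Z | U ∪ dglAngel g Z ⊆ Z} ⊆ Aᶜ ∪ B₀
    apply Set.sInter_subset_of_mem
    show U ∪ dglAngel g (Aᶜ ∪ B₀) ⊆ Aᶜ ∪ B₀
    rintro ω (hω | hω)
    · by_cases hωA : ω ∈ A
      · have hωW : ω ∈ W := (hAfix ▸ hωA).1
        exact Or.inr (tieB_prefixed g (U ∩ W) (Or.inl ⟨hω, hωW⟩))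
      · exact Or.inl hωA
    · by_cases hωA : ω ∈ A
      · have hωD : ω ∈ dglDemon g A := (hAfix ▸ hωA).2
        have := hL5 (Aᶜ ∪ B₀) A ⟨hω, hωD⟩
        have hsub : (Aᶜ ∪ B₀) ∩ A ⊆ B₀ := by
          rintro x ⟨hx1 | hx1, hx2⟩
          · exact absurd hx2 hx1
          · exact hx1
        have hmem : ω ∈ angel g B₀ B₀ ∩ demon g B₀ B₀ :=
          ⟨(ad_mono g hsub hsub).1 this.1, (ad_mono g hsub hsub).2 this.2⟩
        exact Or.inr (tieB_prefixed g (U ∩ W) (Or.inr hmem))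
      · exact Or.inl hωA
  rintro ω ⟨h1, h2⟩
  rcases hE h1 with h | h
  · exact absurd h2 h
  · exact h
theorem cross (g : Game V) : ∀ U W : Set (V → ℝ),
    dglAngel g U ∩ dglDemon g W ⊆
      angel g (U ∩ W) (U ∩ W) ∩ demon g (U ∩ W) (U ∩ W) := by
  induction g with
  | assign x e =>
      rintro U W ω ⟨h1, h2⟩
      have hW : Function.update ω x (e ω) ∈ W := by
        by_contra hc
        exact h2 hc
      exact ⟨⟨h1, hW⟩, ⟨h1, hW⟩⟩
  | ode x f Q =>
      rintro U W ω ⟨⟨r, φ, hsol, h0, hr⟩, h2⟩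
      have hrW : φ r ∈ W := by
        by_contra hc
        exact h2 ⟨r, φ, hsol, h0, hc⟩
      refine ⟨⟨r, φ, hsol, h0, hr, hrW⟩, Or.inr ⟨r, φ, hsol, h0, r,
        ⟨hsol.1, le_refl r⟩, ⟨⟨hr, hrW⟩, ⟨hr, hrW⟩⟩⟩⟩
  | test Q =>
      rintro U W ω ⟨⟨hq, hu⟩, h2⟩
      have hW : ω ∈ W := by
        by_contra hc
        exact h2 ⟨hq, hc⟩
      exact ⟨⟨hq, hu, hW⟩, Or.inr ⟨hu, hW⟩⟩
  | choice a b iha ihb =>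
      rintro U W ω ⟨h1, h2⟩
      have h1' : ω ∈ dglAngel a U ∨ ω ∈ dglAngel b U := h1
      have h2a : ω ∈ dglDemon a W := fun hc => h2 (Or.inl hc)
      have h2b : ω ∈ dglDemon b W := fun hc => h2 (Or.inr hc)
      rcases h1' with hA | hB
      · have := iha U W ⟨hA, h2a⟩
        exact ⟨Or.inl this.1, Or.inl (Or.inr ⟨this.2, this.1⟩)⟩
      · have := ihb U W ⟨hB, h2b⟩
        exact ⟨Or.inr this.1, Or.inr ⟨this.2, this.1⟩⟩
  | seq a b iha ihb =>
      rintro U W ω ⟨h1, h2⟩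
      have h2' : ω ∈ dglDemon a (dglDemon b W) := by
        show ω ∈ (dglAngel a (dglDemon b W)ᶜ)ᶜ
        rw [show (dglDemon b W)ᶜ = dglAngel b Wᶜ from compl_compl _]
        exact h2
      have hP := iha (dglAngel b U) (dglDemon b W) ⟨h1, h2'⟩
      have hsub1 : dglAngel b U ∩ dglDemon b W ⊆ angel b (U ∩ W) (U ∩ W) :=
        fun x hx => (ihb U W hx).1
      have hsub2 : dglAngel b U ∩ dglDemon b W ⊆ demon b (U ∩ W) (U ∩ W) :=
        fun x hx => (ihb U W hx).2
      exact ⟨(ad_mono a hsub1 hsub2).1 hP.1, (ad_mono a hsub1 hsub2).2 hP.2⟩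
  | dual a iha =>
      rintro U W ω ⟨h1, h2⟩
      have h1' : ω ∈ dglDemon a U := h1
      have h2' : ω ∈ dglAngel a W := by
        have : ω ∈ ((dglAngel a Wᶜᶜ)ᶜ)ᶜ := h2
        simpa [compl_compl] using this
      have := iha W U ⟨h2', h1'⟩
      rw [Set.inter_comm W U] at this
      exact ⟨this.2, this.1⟩
  | star a iha =>
      intro U W ω hω
      have hB := crossStar a iha U W hω
      constructor
      · show ω ∈ ⋂₀ {Z | U ∩ W ∪ angel a Z Zᶜ ⊆ Z} ∪
          ⋂₀ {Z | (U ∩ W) ∩ (U ∩ W) ∪ (angel a Z Z ∩ demon a Z Z) ⊆ Z}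
        right
        simpa only [Set.inter_self] using hB
      · show ω ∈ ⋃₀ {Z | Z ⊆ U ∩ W ∩ demon a Zᶜ Z} ∪
          ⋂₀ {Z | (U ∩ W) ∩ (U ∩ W) ∪ (angel a Z Z ∩ demon a Z Z) ⊆ Z}
        right
        simpa only [Set.inter_self] using hB
theorem setA_eq (a : Game V) (X : Set (V → ℝ)) :
    ⋂₀ {Z | X ∪ angel a Z Zᶜ ⊆ Z} = dglAngel (Game.star a) X := by
  have : {Z : Set (V → ℝ) | X ∪ angel a Z Zᶜ ⊆ Z} = {Z | X ∪ dglAngel a Z ⊆ Z} := by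
    ext Z; rw [Set.mem_setOf_eq, Set.mem_setOf_eq, (zs a).1 Z]
  rw [this]; rfl

theorem setD_eq (a : Game V) (Y : Set (V → ℝ)) :
    ⋃₀ {Z | Z ⊆ Y ∩ demon a Zᶜ Z} = dglDemon (Game.star a) Y := by
  have : {Z : Set (V → ℝ) | Z ⊆ Y ∩ demon a Zᶜ Z} = {Z | Z ⊆ Y ∩ dglDemon a Z} := by
    ext Z; rw [Set.mem_setOf_eq, Set.mem_setOf_eq, (zs a).2.1 Z]
  rw [this]
  exact gfp_compl a Y

theorem tie_sub (g : Game V) : ∀ X Y : Set (V → ℝ),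
    angel g X Y ∩ demon g X Y ⊆
      angel g (X ∩ Y) (X ∩ Y) ∩ demon g (X ∩ Y) (X ∩ Y) := by
  induction g with
  | assign x e =>
      rintro X Y ω ⟨h1, h2⟩
      exact ⟨⟨h1, h2⟩, ⟨h1, h2⟩⟩
  | ode x f Q =>
      rintro X Y ω ⟨⟨r, φ, hsol, h0, hr⟩, h2⟩
      have h2' : (∀ r' φ', IsSolution x f Q r' φ' → φ' 0 = ω →
          ∀ s ∈ Set.Icc 0 r', φ' s ∈ Y) ∨
          (∃ r' φ', IsSolution x f Q r' φ' ∧ φ' 0 = ω ∧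
            ∃ s ∈ Set.Icc (0:ℝ) r', φ' s ∈ X ∩ Y) := h2
      rcases h2' with hall | ⟨r', φ', hs', h0', s, hs2, hmem⟩
      · have hrY := hall r φ hsol h0 r ⟨hsol.1, le_refl r⟩
        exact ⟨⟨r, φ, hsol, h0, hr, hrY⟩, Or.inr ⟨r, φ, hsol, h0, r,
          ⟨hsol.1, le_refl r⟩, ⟨⟨hr, hrY⟩, ⟨hr, hrY⟩⟩⟩⟩
      · have hts := hs'.trunc hs2
        exact ⟨⟨s, φ', hts, h0', hmem⟩, Or.inr ⟨s, φ', hts, h0', s,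
          ⟨hs2.1, le_refl s⟩, ⟨hmem, hmem⟩⟩⟩
  | test Q =>
      rintro X Y ω ⟨⟨hq, hx⟩, h2⟩
      have h2' : ω ∈ Qᶜ ∨ ω ∈ Y := h2
      rcases h2' with hq' | hy
      · exact absurd hq hq'
      · exact ⟨⟨hq, hx, hy⟩, Or.inr ⟨hx, hy⟩⟩
  | choice a b iha ihb =>
      rintro X Y ω ⟨h1, h2⟩
      have h1' : ω ∈ angel a X Y ∨ ω ∈ angel b X Y := h1
      have h2' : (ω ∈ demon a X Y ∧ ω ∈ demon b X Y ∨
          ω ∈ demon a X Y ∧ ω ∈ angel a X Y) ∨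
          ω ∈ demon b X Y ∧ ω ∈ angel b X Y := h2
      have mkA : ω ∈ angel a X Y ∩ demon a X Y →
          ω ∈ angel (Game.choice a b) (X ∩ Y) (X ∩ Y) ∩
            demon (Game.choice a b) (X ∩ Y) (X ∩ Y) := by
        intro h
        have t := iha X Y h
        exact ⟨Or.inl t.1, Or.inl (Or.inr ⟨t.2, t.1⟩)⟩
      have mkB : ω ∈ angel b X Y ∩ demon b X Y →
          ω ∈ angel (Game.choice a b) (X ∩ Y) (X ∩ Y) ∩
            demon (Game.choice a b) (X ∩ Y) (X ∩ Y) := by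
        intro h
        have t := ihb X Y h
        exact ⟨Or.inr t.1, Or.inr ⟨t.2, t.1⟩⟩
      rcases h1' with hA | hB <;>
        rcases h2' with (⟨hda, hdb⟩ | ⟨hda, hsa⟩) | ⟨hdb, hsb⟩
      · exact mkA ⟨hA, hda⟩
      · exact mkA ⟨hA, hda⟩
      · exact mkB ⟨hsb, hdb⟩
      · exact mkB ⟨hB, hdb⟩
      · exact mkA ⟨hsa, hda⟩
      · exact mkB ⟨hB, hdb⟩
  | seq a b iha ihb =>
      rintro X Y ω ⟨h1, h2⟩
      have t := iha (angel b X Y) (demon b X Y) ⟨h1, h2⟩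
      have hsub1 : angel b X Y ∩ demon b X Y ⊆ angel b (X ∩ Y) (X ∩ Y) :=
        fun x hx => (ihb X Y hx).1
      have hsub2 : angel b X Y ∩ demon b X Y ⊆ demon b (X ∩ Y) (X ∩ Y) :=
        fun x hx => (ihb X Y hx).2
      exact ⟨(ad_mono a hsub1 hsub2).1 t.1, (ad_mono a hsub1 hsub2).2 t.2⟩
  | dual a iha =>
      rintro X Y ω ⟨h1, h2⟩
      have t := iha Y X ⟨h2, h1⟩
      rw [Set.inter_comm Y X] at t
      exact ⟨t.2, t.1⟩
  | star a iha =>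
      rintro X Y ω ⟨h1, h2⟩
      have h1' : ω ∈ ⋂₀ {Z | X ∪ angel a Z Zᶜ ⊆ Z} ∨
          ω ∈ ⋂₀ {Z | (X ∩ Y) ∪ (angel a Z Z ∩ demon a Z Z) ⊆ Z} := h1
      have h2' : ω ∈ ⋃₀ {Z | Z ⊆ Y ∩ demon a Zᶜ Z} ∨
          ω ∈ ⋂₀ {Z | (X ∩ Y) ∪ (angel a Z Z ∩ demon a Z Z) ⊆ Z} := h2
      have hBT : ω ∈ ⋂₀ {Z | (X ∩ Y) ∪ (angel a Z Z ∩ demon a Z Z) ⊆ Z} →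
          ω ∈ angel (Game.star a) (X ∩ Y) (X ∩ Y) ∩
            demon (Game.star a) (X ∩ Y) (X ∩ Y) := by
        intro hB
        constructor
        · show ω ∈ ⋂₀ {Z | X ∩ Y ∪ angel a Z Zᶜ ⊆ Z} ∪
            ⋂₀ {Z | (X ∩ Y) ∩ (X ∩ Y) ∪ (angel a Z Z ∩ demon a Z Z) ⊆ Z}
          right
          simpa only [Set.inter_self] using hB
        · show ω ∈ ⋃₀ {Z | Z ⊆ X ∩ Y ∩ demon a Zᶜ Z} ∪
            ⋂₀ {Z | (X ∩ Y) ∩ (X ∩ Y) ∪ (angel a Z Z ∩ demon a Z Z) ⊆ Z}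
          right
          simpa only [Set.inter_self] using hB
      rcases h1' with hP1 | hB
      · rcases h2' with hP2 | hB
        · refine cross (Game.star a) X Y ⟨?_, ?_⟩
          · rw [← setA_eq a X]; exact hP1
          · rw [← setD_eq a Y]; exact hP2
        · exact hBT hB
      · exact hBT hB
/-- Soundness of the repetition unfolding axiom [*] for Demon:
`δ_{α*}(X, Y) = (X ∩ Y) ∪ (ς_{α;α*}(X, Y) ∩ δ_{α;α*}(X, Y)) ∪ (Y ∩ δ_{α;α*}(Yᶜ, Y))`. -/
theorem repetition_unfold_demon (α : Game V) (X Y : Set (V → ℝ)) :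
    demon (.star α) X Y =
      (X ∩ Y) ∪ (angel (.seq α (.star α)) X Y ∩ demon (.seq α (.star α)) X Y) ∪
      (Y ∩ demon (.seq α (.star α)) Yᶜ Y) := by
  set B := ⋂₀ {Z | (X ∩ Y) ∪ (angel α Z Z ∩ demon α Z Z) ⊆ Z} with hBdef
  set A := ⋃₀ {Z : Set (V → ℝ) | Z ⊆ Y ∩ demon α Zᶜ Z} with hAdef
  have hA_eq : A = dglDemon (Game.star α) Y := setD_eq α Y
  -- basic facts about B
  have hXYB : X ∩ Y ⊆ B := fun ω h Z hZ => hZ (Or.inl h)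
  have hFB : angel α B B ∩ demon α B B ⊆ B :=
    fun ω h => tieB_prefixed α (X ∩ Y) (Or.inr h)
  have hBP : B ⊆ (X ∩ Y) ∪ (angel α B B ∩ demon α B B) := by
    apply Set.sInter_subset_of_mem
    show (X ∩ Y) ∪ (angel α ((X ∩ Y) ∪ (angel α B B ∩ demon α B B))
        ((X ∩ Y) ∪ (angel α B B ∩ demon α B B)) ∩
      demon α ((X ∩ Y) ∪ (angel α B B ∩ demon α B B))
        ((X ∩ Y) ∪ (angel α B B ∩ demon α B B))) ⊆
      (X ∩ Y) ∪ (angel α B B ∩ demon α B B)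
    rintro x (hx | hx)
    · exact Or.inl hx
    · have hPB : (X ∩ Y) ∪ (angel α B B ∩ demon α B B) ⊆ B :=
        Set.union_subset hXYB hFB
      exact Or.inr ⟨(ad_mono α hPB hPB).1 hx.1, (ad_mono α hPB hPB).2 hx.2⟩
  -- the (Yᶜ, Y)-tie component is empty
  have hB' : ⋂₀ {Z | (Yᶜ ∩ Y) ∪ (angel α Z Z ∩ demon α Z Z) ⊆ Z} = (∅ : Set (V → ℝ)) := by
    refine subset_antisymm ?_ (Set.empty_subset _)
    apply Set.sInter_subset_of_mem
    show (Yᶜ ∩ Y) ∪ (angel α ∅ ∅ ∩ demon α ∅ ∅) ⊆ ∅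
    rw [Set.compl_inter_self, (zs α).2.2 ∅ ∅ (by simp)]
    simp
  -- identification of the (Yᶜ, Y) winning regions
  have hS' : angel (Game.star α) Yᶜ Y = Aᶜ := by
    show ⋂₀ {Z | Yᶜ ∪ angel α Z Zᶜ ⊆ Z} ∪
      ⋂₀ {Z | (Yᶜ ∩ Y) ∪ (angel α Z Z ∩ demon α Z Z) ⊆ Z} = Aᶜ
    rw [hB', Set.union_empty, setA_eq α Yᶜ, hA_eq]
    show dglAngel (Game.star α) Yᶜ = ((dglAngel (Game.star α) Yᶜ)ᶜ)ᶜ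
    rw [compl_compl]
  have hT' : demon (Game.star α) Yᶜ Y = A := by
    show ⋃₀ {Z : Set (V → ℝ) | Z ⊆ Y ∩ demon α Zᶜ Z} ∪
      ⋂₀ {Z | (Yᶜ ∩ Y) ∪ (angel α Z Z ∩ demon α Z Z) ⊆ Z} = A
    rw [hB', Set.union_empty]
  have hAfix : A = Y ∩ demon α Aᶜ A := by
    rw [(zs α).2.1 A, hA_eq]
    exact dglDemon_star_fixed α Y
  -- the intersection of the two α* regions is B
  have hST : angel (Game.star α) X Y ∩ demon (Game.star α) X Y = B := by
    apply subset_antisymm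
    · rintro ω ⟨hs, ht⟩
      have hs' : ω ∈ ⋂₀ {Z | X ∪ angel α Z Zᶜ ⊆ Z} ∨ ω ∈ B := hs
      have ht' : ω ∈ A ∨ ω ∈ B := ht
      rcases hs' with hs' | hs'
      · rcases ht' with ht' | ht'
        · have hCA : ⋂₀ {Z | X ∪ angel α Z Zᶜ ⊆ Z} ∩ A ⊆ B := by
            rw [setA_eq α X, hA_eq]
            exact crossStar α (cross α) X Y
          exact hCA ⟨hs', ht'⟩
        · exact ht'
      · exact hs'
    · intro ω h
      exact ⟨Or.inr h, Or.inr h⟩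
  -- the middle summand is squeezed between F(B) and B
  have hmid_sub : angel α (angel (Game.star α) X Y) (demon (Game.star α) X Y) ∩
      demon α (angel (Game.star α) X Y) (demon (Game.star α) X Y) ⊆ B := by
    intro ω h
    have t := tie_sub α _ _ h
    rw [hST] at t
    exact hFB t
  have hmid_sup : angel α B B ∩ demon α B B ⊆
      angel α (angel (Game.star α) X Y) (demon (Game.star α) X Y) ∩
      demon α (angel (Game.star α) X Y) (demon (Game.star α) X Y) := by
    have hsub : B ⊆ angel (Game.star α) X Y := fun x hx => Or.inr hx
    have hsub' : B ⊆ demon (Game.star α) X Y := fun x hx => Or.inr hx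
    exact fun x hx => ⟨(ad_mono α hsub hsub').1 hx.1, (ad_mono α hsub hsub').2 hx.2⟩
  -- assemble
  show A ∪ B = (X ∩ Y) ∪
      (angel α (angel (Game.star α) X Y) (demon (Game.star α) X Y) ∩
        demon α (angel (Game.star α) X Y) (demon (Game.star α) X Y)) ∪
      (Y ∩ demon α (angel (Game.star α) Yᶜ Y) (demon (Game.star α) Yᶜ Y))
  rw [hS', hT', ← hAfix]
  apply subset_antisymm
  · rintro ω (h | h)
    · exact Or.inr h
    · rcases hBP h with hx | hx
      · exact Or.inl (Or.inl hx)
      · exact Or.inl (Or.inr (hmid_sup hx))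
  · rintro ω ((h | h) | h)
    · exact Or.inr (hXYB h)
    · exact Or.inr (hmid_sub h)
    · exact Or.inl h
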